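/- arXiv:0709.1151 — 3 statements merged into one kernel-verified Lean document; each statement's English description precedes it below -/
import Mathlib

section
/- Let I ⊆ ℝ be an open interval and let f, g : I → ℝ be smooth with f > 0 and g' > 0 on I, and suppose f and g satisfy Eq. (I) and Eq. (II) on I. Let k₁, k₂ ∈ ℝ and k₃ ≠ 0, and let U : ℝ × ℝ → ℝ be smooth and satisfy the uniform beam equation ∂²U/∂T² + ∂⁴U/∂X⁴ = 0 on all of ℝ². Then the function u(t,x) := U(t + k₁, g(x) + k₂) / (k₃·√(f(x)·g'(x)³)) satisfies the Euler–Bernoulli equation ∂²/∂x²( f(x)·∂²u/∂x² ) + g'(x)⁴·f(x)·∂²u/∂t² = 0 at every point of ℝ × I. -/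
/-- Eq. (I): `g''' = (3/10)·g'·(f')²/f² − (2/5)·g'·f''/f + (3/2)·(g'')²/g'`. -/
def SatEqI (f g : ℝ → ℝ) (x : ℝ) : Prop :=
  (deriv^[3] g x) =
    (3/10) * deriv g x * (deriv f x)^2 / (f x)^2
      - (2/5) * deriv g x * (deriv^[2] f x) / f x
      + (3/2) * (deriv^[2] g x)^2 / deriv g x

/-- Eq. (II): `f'''' = f'·f'''/f + (11/10)·(f'')²/f − (12/5)·(f')²·f''/f² + (9/10)·(f')⁴/f³`. -/
def SatEqII (f : ℝ → ℝ) (x : ℝ) : Prop :=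
  (deriv^[4] f x) =
    deriv f x * (deriv^[3] f x) / f x
      + (11/10) * (deriv^[2] f x)^2 / f x
      - (12/5) * (deriv f x)^2 * (deriv^[2] f x) / (f x)^2
      + (9/10) * (deriv f x)^4 / (f x)^3

/-!
Write `u = A · V ∘ (g + k₂)` with amplitude `A = (k₃ √(f g'³))⁻¹` and `V = U (t + k₁)`.
A function `G · Σᵢ cᵢ g'ⁱ V⁽ⁱ⁾(g + k₂)`, where `G'/G` and the `cᵢ` are polynomials in
`f'/f, f''/f, f'''/f, g''/g'`, differentiates to one of the same shape. Eqs. (I) and (II) say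
precisely that these four quotients differentiate to polynomials in themselves, so the new
coefficients are computed in a polynomial ring with a derivation. Two differentiations with
weight `A` followed by two with weight `f A` turn the coefficients `(1)` into `(0, 0, 0, 0, 1)`:
`(f u_xx)_xx = f g'⁴ A · V''''(g + k₂)`, and the beam equation for `U` turns this into
`-g'⁴ f u_tt`.
-/

open MvPolynomial Finset Filter

theorem ContDiffOn.hasDerivAt_iterate_deriv {I : Set ℝ} (hI : IsOpen I) {F : ℝ → ℝ}
    (hF : ContDiffOn ℝ (⊤ : ℕ∞) F I) (k : ℕ) {y : ℝ} (hy : y ∈ I) :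
    HasDerivAt (deriv^[k] F) (deriv^[k + 1] F y) y := by
  have hk : ContDiffOn ℝ (⊤ : ℕ∞) (deriv^[k] F) I := by
    induction k with
    | zero => exact hF
    | succ k ih =>
      rw [Function.iterate_succ_apply']
      exact ((contDiffOn_infty_iff_deriv_of_isOpen hI).mp ih).2
  rw [Function.iterate_succ_apply']
  exact ((hk.differentiableOn (by simp)).differentiableAt (hI.mem_nhds hy)).hasDerivAt

theorem ContDiffOn.hasDerivAt_iterate_deriv_div_self {I : Set ℝ} (hI : IsOpen I)
    {F : ℝ → ℝ} (hF : ContDiffOn ℝ (⊤ : ℕ∞) F I) (k : ℕ) {y : ℝ} (hy : y ∈ I)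
    (hFy : F y ≠ 0) :
    HasDerivAt (fun z => deriv^[k + 1] F z / F z)
      (deriv^[k + 2] F y / F y - deriv F y / F y * (deriv^[k + 1] F y / F y)) y := by
  refine ((hF.hasDerivAt_iterate_deriv hI (k + 1) hy).div
    (hF.hasDerivAt_iterate_deriv hI 0 hy) hFy).congr_deriv ?_
  simp only [Function.iterate_zero, id, zero_add, Function.iterate_one]
  field_simp

theorem hasDerivAt_inv_const_mul_sqrt {S : ℝ → ℝ} {S' y k : ℝ} (hS : HasDerivAt S S' y)
    (hpos : 0 < S y) (hk : k ≠ 0) :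
    HasDerivAt (fun z => (k * √(S z))⁻¹) (-(S' / S y) / 2 * (k * √(S y))⁻¹) y := by
  have hsqrt : √(S y) ≠ 0 := (Real.sqrt_pos.mpr hpos).ne'
  refine (((hS.sqrt hpos.ne').const_mul k).inv (mul_ne_zero hk hsqrt)).congr_deriv ?_
  field_simp
  rw [Real.sq_sqrt hpos.le]

theorem hasDerivAt_iteratedDeriv_comp_add_const {V : ℝ → ℝ} (hV : ContDiff ℝ (⊤ : ℕ∞) V)
    {g : ℝ → ℝ} {g' y : ℝ} (hg : HasDerivAt g g' y) (c : ℝ) (i : ℕ) :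
    HasDerivAt (fun z => iteratedDeriv i V (g z + c))
      (g' * iteratedDeriv (i + 1) V (g y + c)) y := by
  have hVi := ((hV.differentiable_iteratedDeriv i (by exact_mod_cast WithTop.coe_lt_top _))
    (g y + c)).hasDerivAt
  rw [← iteratedDeriv_succ] at hVi
  exact (hVi.comp y (hg.add_const c)).congr_deriv (mul_comm _ _)

theorem deriv_deriv_eq_of_hasDerivAt {I : Set ℝ} (hI : IsOpen I) {F₀ F₁ F₂ : ℝ → ℝ}
    (h₀ : ∀ y ∈ I, HasDerivAt F₀ (F₁ y) y) (h₁ : ∀ y ∈ I, HasDerivAt F₁ (F₂ y) y)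
    {x : ℝ} (hx : x ∈ I) : deriv (deriv F₀) x = F₂ x := by
  have h : deriv F₀ =ᶠ[nhds x] F₁ :=
    eventually_of_mem (hI.mem_nhds hx) fun y hy => (h₀ y hy).deriv
  rw [h.deriv_eq]
  exact (h₁ x hx).deriv

theorem MvPolynomial.hasDerivAt_eval_mkDerivation {σ : Type*} (rules : σ → MvPolynomial σ ℝ)
    {v : ℝ → σ → ℝ} {y : ℝ} (hv : ∀ i, HasDerivAt (fun z => v z i) (eval (v y) (rules i)) y)
    (F : MvPolynomial σ ℝ) :
    HasDerivAt (fun z => eval (v z) F) (eval (v y) (mkDerivation ℝ rules F)) y := by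
  induction F using MvPolynomial.induction_on with
  | C a =>
    simpa [← algebraMap_eq, Derivation.map_algebraMap] using hasDerivAt_const y a
  | add F G hF hG => simpa using hF.fun_add hG
  | mul_X F i hF =>
    simp only [map_mul, eval_X, Derivation.leibniz, mkDerivation_X, smul_eq_mul, map_add]
    exact (hF.fun_mul (hv i)).congr_deriv (by ring)

theorem HasDerivAt.pow_of_logDeriv {q : ℝ → ℝ} {m y : ℝ} (hq : HasDerivAt q (m * q y) y)
    (i : ℕ) : HasDerivAt (fun z => q z ^ i) (i * m * q y ^ i) y := by
  induction i with
  | zero => simpa using hasDerivAt_const y (1 : ℝ)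
  | succ i ih =>
    refine (ih.fun_mul hq).congr_deriv ?_
    push_cast
    ring

-- If `G' = γ G`, `q' = m q` and `Wᵢ' = q Wᵢ₊₁`, the derivative of `G · Σᵢ κᵢ qⁱ Wᵢ` is
-- `G · Σᵢ (jetStep D m γ κ)ᵢ qⁱ Wᵢ`, with `D` differentiating the coefficients.
noncomputable def jetStep {A : Type*} [CommRing A] [Algebra ℝ A] (D : Derivation ℝ A A)
    (m γ : A) (κ : ℕ → A) : ℕ → A
  | 0 => γ * κ 0 + D (κ 0)
  | i + 1 => γ * κ (i + 1) + D (κ (i + 1)) + (i + 1) * m * κ (i + 1) + κ i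

section Jet

variable {σ : Type*} (v : ℝ → σ → ℝ) (q : ℝ → ℝ) (W : ℕ → ℝ → ℝ)

noncomputable def jet (κ : ℕ → MvPolynomial σ ℝ) (n : ℕ) (z : ℝ) : ℝ :=
  ∑ i ∈ range n, eval (v z) (κ i) * q z ^ i * W i z

variable {v q W}

theorem hasDerivAt_mul_jet (rules : σ → MvPolynomial σ ℝ) {G : ℝ → ℝ}
    {m γ : MvPolynomial σ ℝ} {κ : ℕ → MvPolynomial σ ℝ} {n : ℕ} {y : ℝ}
    (hv : ∀ i, HasDerivAt (fun z => v z i) (eval (v y) (rules i)) y)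
    (hq : HasDerivAt q (eval (v y) m * q y) y)
    (hW : ∀ i, HasDerivAt (W i) (q y * W (i + 1) y) y)
    (hG : HasDerivAt G (eval (v y) γ * G y) y) (hκ : κ n = 0) :
    HasDerivAt (fun z => G z * jet v q W κ n z)
      (G y * jet v q W (jetStep (mkDerivation ℝ rules) m γ κ) (n + 1) y) y := by
  set D := mkDerivation ℝ rules
  set a : ℕ → ℝ := fun i => (eval (v y) γ * eval (v y) (κ i) + eval (v y) (D (κ i))
    + i * eval (v y) m * eval (v y) (κ i)) * q y ^ i * W i y
  set b : ℕ → ℝ := fun i => eval (v y) (κ i) * q y ^ (i + 1) * W (i + 1) y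
  have hterm (i : ℕ) : HasDerivAt (fun z => G z * (eval (v z) (κ i) * q z ^ i * W i z))
      (G y * (a i + b i)) y :=
    (hG.fun_mul (((hasDerivAt_eval_mkDerivation rules hv (κ i)).fun_mul
      (hq.pow_of_logDeriv i)).fun_mul (hW i))).congr_deriv (by ring)
  have hstep (i : ℕ) : eval (v y) (jetStep D m γ κ (i + 1)) * q y ^ (i + 1) * W (i + 1) y
      = a (i + 1) + b i := by
    simp only [jetStep, a, b, map_add, map_mul, map_natCast, map_one]
    push_cast
    ring
  have hsum : jet v q W (jetStep D m γ κ) (n + 1) y = ∑ i ∈ range n, (a i + b i) := calc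
    _ = ∑ i ∈ range n, (a (i + 1) + b i) + a 0 := by
      rw [jet, sum_range_succ']
      simp only [hstep]
      congr 1
      simp [jetStep, a]
    _ = ∑ i ∈ range (n + 1), a i + ∑ i ∈ range n, b i := by
      rw [sum_range_succ' a, sum_add_distrib]
      ring
    _ = ∑ i ∈ range n, (a i + b i) := by
      rw [sum_range_succ, show a n = 0 by simp [a, hκ], add_zero, sum_add_distrib]
  have hfun : (fun z => G z * jet v q W κ n z)
      = fun z => ∑ i ∈ range n, G z * (eval (v z) (κ i) * q z ^ i * W i z) := by
    funext z
    simp only [jet, mul_sum]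
  rw [hfun, hsum, mul_sum]
  exact HasDerivAt.fun_sum fun i _ => hterm i

end Jet

/-- The variables `X 0, X 1, X 2, X 3` stand for `f'/f, f''/f, f'''/f, g''/g'`; the rules for
`X 2` and `X 3` are Eqs. (II) and (I). -/
noncomputable def beamRules : Fin 4 → MvPolynomial (Fin 4) ℝ :=
  ![X 1 - X 0 ^ 2, X 2 - X 0 * X 1,
    C (11/10) * X 1 ^ 2 - C (12/5) * X 0 ^ 2 * X 1 + C (9/10) * X 0 ^ 4,
    C (3/10) * X 0 ^ 2 - C (2/5) * X 1 + C (1/2) * X 3 ^ 2]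

noncomputable def beamDerivation :
    Derivation ℝ (MvPolynomial (Fin 4) ℝ) (MvPolynomial (Fin 4) ℝ) :=
  mkDerivation ℝ beamRules

@[simp] theorem beamDerivation_X (i : Fin 4) : beamDerivation (X i) = beamRules i :=
  mkDerivation_X _ _ _

@[simp] theorem beamDerivation_ofNat (n : ℕ) [n.AtLeastTwo] :
    beamDerivation (no_index (OfNat.ofNat n : MvPolynomial (Fin 4) ℝ)) = 0 :=
  beamDerivation.map_natCast n

noncomputable def amplitudeLogDeriv : MvPolynomial (Fin 4) ℝ := -C (1/2) * (X 0 + 3 * X 3)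

noncomputable abbrev beamStep (γ : MvPolynomial (Fin 4) ℝ) :
    (ℕ → MvPolynomial (Fin 4) ℝ) → ℕ → MvPolynomial (Fin 4) ℝ :=
  jetStep beamDerivation (X 3) γ

-- `X 0 + amplitudeLogDeriv` is the logarithmic derivative of `f * amplitude`.
theorem beamStep_four_eq_single : ∀ i < 5,
    beamStep (X 0 + amplitudeLogDeriv) (beamStep (X 0 + amplitudeLogDeriv)
      (beamStep amplitudeLogDeriv (beamStep amplitudeLogDeriv (Pi.single 0 1)))) i
      = (Pi.single 4 1 : ℕ → MvPolynomial (Fin 4) ℝ) i := by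
  intro i hi
  refine MvPolynomial.funext fun w => ?_
  interval_cases i <;>
  simp [jetStep, amplitudeLogDeriv, beamRules, Derivation.leibniz, pow_succ] <;>
  ring

noncomputable def amplitude (f g : ℝ → ℝ) (k z : ℝ) : ℝ := (k * √(f z * deriv g z ^ 3))⁻¹

noncomputable def beamCoords (f g : ℝ → ℝ) (z : ℝ) : Fin 4 → ℝ :=
  ![deriv f z / f z, deriv^[2] f z / f z, deriv^[3] f z / f z, deriv^[2] g z / deriv g z]

noncomputable def beamJet (f g V : ℝ → ℝ) (c : ℝ) : (ℕ → MvPolynomial (Fin 4) ℝ) → ℕ → ℝ → ℝ :=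
  jet (beamCoords f g) (deriv g) fun i z => iteratedDeriv i V (g z + c)

section Transformation

variable {I : Set ℝ} (hI : IsOpen I) {f g : ℝ → ℝ}
    (hf : ContDiffOn ℝ (⊤ : ℕ∞) f I) (hg : ContDiffOn ℝ (⊤ : ℕ∞) g I)
    (hfpos : ∀ x ∈ I, 0 < f x) (hg' : ∀ x ∈ I, 0 < deriv g x)
include hI hf hg hfpos hg'

theorem hasDerivAt_beamCoords (hEqI : ∀ x ∈ I, SatEqI f g x) (hEqII : ∀ x ∈ I, SatEqII f x)
    {y : ℝ} (hy : y ∈ I) (i : Fin 4) :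
    HasDerivAt (fun z => beamCoords f g z i) (eval (beamCoords f g y) (beamRules i)) y := by
  have hfy := (hfpos y hy).ne'
  have hgy := (hg' y hy).ne'
  have hdg : ContDiffOn ℝ (⊤ : ℕ∞) (deriv g) I :=
    ((contDiffOn_infty_iff_deriv_of_isOpen hI).mp hg).2
  fin_cases i
  · refine (hf.hasDerivAt_iterate_deriv_div_self hI 0 hy hfy).congr_deriv ?_
    simp [beamCoords, beamRules]
    ring
  · refine (hf.hasDerivAt_iterate_deriv_div_self hI 1 hy hfy).congr_deriv ?_
    simp [beamCoords, beamRules]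
  · refine (hf.hasDerivAt_iterate_deriv_div_self hI 2 hy hfy).congr_deriv ?_
    have h := hEqII y hy
    simp only [SatEqII] at h
    simp [beamCoords, beamRules] at h ⊢
    field_simp at h ⊢
    linear_combination h
  · refine (hdg.hasDerivAt_iterate_deriv_div_self hI 0 hy hgy).congr_deriv ?_
    have h := hEqI y hy
    simp only [SatEqI] at h
    simp [beamCoords, beamRules] at h ⊢
    field_simp at h ⊢
    linear_combination h

theorem hasDerivAt_amplitude {y : ℝ} (hy : y ∈ I) {k : ℝ} (hk : k ≠ 0) :
    HasDerivAt (amplitude f g k)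
      (eval (beamCoords f g y) amplitudeLogDeriv * amplitude f g k y) y := by
  have hfy := hfpos y hy
  have hgy := hg' y hy
  have hdg : ContDiffOn ℝ (⊤ : ℕ∞) (deriv g) I :=
    ((contDiffOn_infty_iff_deriv_of_isOpen hI).mp hg).2
  have hS := (hf.hasDerivAt_iterate_deriv hI 0 hy).fun_mul
    ((hdg.hasDerivAt_iterate_deriv hI 0 hy).fun_pow 3)
  simp only [Function.iterate_zero, id, zero_add, Function.iterate_one] at hS
  refine (hasDerivAt_inv_const_mul_sqrt hS (by positivity) hk).congr_deriv ?_
  simp [amplitudeLogDeriv, beamCoords, amplitude]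
  field_simp

theorem hasDerivAt_mul_amplitude {y : ℝ} (hy : y ∈ I) {k : ℝ} (hk : k ≠ 0) :
    HasDerivAt (fun z => f z * amplitude f g k z)
      (eval (beamCoords f g y) (X 0 + amplitudeLogDeriv) * (f y * amplitude f g k y)) y := by
  refine ((hf.hasDerivAt_iterate_deriv hI 0 hy).fun_mul
    (hasDerivAt_amplitude hI hf hg hfpos hg' hy hk)).congr_deriv ?_
  have hfy := (hfpos y hy).ne'
  simp [beamCoords]
  field_simp

theorem hasDerivAt_mul_jet_beamStep (hEqI : ∀ x ∈ I, SatEqI f g x)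
    (hEqII : ∀ x ∈ I, SatEqII f x) {V : ℝ → ℝ} (hV : ContDiff ℝ (⊤ : ℕ∞) V) (c : ℝ)
    ⦃G : ℝ → ℝ⦄ ⦃γ : MvPolynomial (Fin 4) ℝ⦄ ⦃κ : ℕ → MvPolynomial (Fin 4) ℝ⦄ ⦃n : ℕ⦄
    ⦃y : ℝ⦄ (hy : y ∈ I) (hG : HasDerivAt G (eval (beamCoords f g y) γ * G y) y)
    (hκ : κ n = 0) :
    HasDerivAt (fun z => G z * beamJet f g V c κ n z)
      (G y * beamJet f g V c (beamStep γ κ) (n + 1) y) y := by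
  have hdg : ContDiffOn ℝ (⊤ : ℕ∞) (deriv g) I :=
    ((contDiffOn_infty_iff_deriv_of_isOpen hI).mp hg).2
  have hq : HasDerivAt (deriv g) (eval (beamCoords f g y) (X 3) * deriv g y) y := by
    refine (hdg.hasDerivAt_iterate_deriv hI 0 hy).congr_deriv ?_
    simp [beamCoords, (hg' y hy).ne']
  exact hasDerivAt_mul_jet beamRules (hasDerivAt_beamCoords hI hf hg hfpos hg' hEqI hEqII hy)
    hq (hasDerivAt_iteratedDeriv_comp_add_const hV
      (by simpa using hg.hasDerivAt_iterate_deriv hI 0 hy) c) hG hκ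

theorem deriv_deriv_mul_iteratedDeriv_two_div_sqrt (hEqI : ∀ x ∈ I, SatEqI f g x)
    (hEqII : ∀ x ∈ I, SatEqII f x) {V : ℝ → ℝ} (hV : ContDiff ℝ (⊤ : ℕ∞) V) (c : ℝ)
    {k : ℝ} (hk : k ≠ 0) {x : ℝ} (hx : x ∈ I) :
    deriv (deriv fun y => f y *
        iteratedDeriv 2 (fun z => V (g z + c) / (k * √(f z * deriv g z ^ 3))) y) x
      = f x * deriv g x ^ 4 * iteratedDeriv 4 V (g x + c) / (k * √(f x * deriv g x ^ 3)) := by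
  have step := hasDerivAt_mul_jet_beamStep hI hf hg hfpos hg' hEqI hEqII hV c
  have hamp (y : ℝ) (hy : y ∈ I) := hasDerivAt_amplitude hI hf hg hfpos hg' hy hk
  have hfamp (y : ℝ) (hy : y ∈ I) := hasDerivAt_mul_amplitude hI hf hg hfpos hg' hy hk
  have hu₀ : (fun z => V (g z + c) / (k * √(f z * deriv g z ^ 3)))
      = fun z => amplitude f g k z * beamJet f g V c (Pi.single 0 1) 1 z := by
    funext z
    simp [beamJet, jet, amplitude, div_eq_mul_inv, mul_comm]
  set κ₂ := beamStep amplitudeLogDeriv (beamStep amplitudeLogDeriv (Pi.single 0 1))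
  have hu₂ (y : ℝ) (hy : y ∈ I) :
      iteratedDeriv 2 (fun z => V (g z + c) / (k * √(f z * deriv g z ^ 3))) y
        = amplitude f g k y * beamJet f g V c κ₂ 3 y := by
    rw [show (2 : ℕ) = 1 + 1 from rfl, iteratedDeriv_succ, iteratedDeriv_one, hu₀]
    exact deriv_deriv_eq_of_hasDerivAt hI (fun y hy => step hy (hamp y hy) (by simp))
      (fun y hy => step hy (hamp y hy) (by simp [jetStep])) hy
  have hfu₂ : (fun y => f y *
        iteratedDeriv 2 (fun z => V (g z + c) / (k * √(f z * deriv g z ^ 3))) y)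
      =ᶠ[nhds x] fun y => f y * amplitude f g k y * beamJet f g V c κ₂ 3 y :=
    eventually_of_mem (hI.mem_nhds hx) fun y hy => by simp only [hu₂ y hy, mul_assoc]
  rw [hfu₂.deriv.deriv_eq, deriv_deriv_eq_of_hasDerivAt hI
    (fun y hy => step hy (hfamp y hy) (by simp [κ₂, jetStep]))
    (fun y hy => step hy (hfamp y hy) (by simp [κ₂, jetStep])) hx]
  rw [beamJet, jet, sum_congr rfl fun i hi => by rw [beamStep_four_eq_single i (mem_range.mp hi)]]
  simp [sum_range_succ, amplitude, div_eq_mul_inv]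
  ring

end Transformation

theorem statement0_general
    (I : Set ℝ) (hIopen : IsOpen I)
    (f g : ℝ → ℝ)
    (hf : ContDiffOn ℝ (⊤ : ℕ∞) f I) (hg : ContDiffOn ℝ (⊤ : ℕ∞) g I)
    (hfpos : ∀ x ∈ I, 0 < f x) (hg' : ∀ x ∈ I, 0 < deriv g x)
    (hEqI : ∀ x ∈ I, SatEqI f g x) (hEqII : ∀ x ∈ I, SatEqII f x)
    (k₁ k₂ k₃ : ℝ) (hk₃ : k₃ ≠ 0)
    (U : ℝ → ℝ → ℝ)
    (hU : ContDiff ℝ (⊤ : ℕ∞) (fun p : ℝ × ℝ => U p.1 p.2))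
    (hUbeam : ∀ T X : ℝ,
      iteratedDeriv 2 (fun s => U s X) T + iteratedDeriv 4 (fun y => U T y) X = 0)
    (u : ℝ → ℝ → ℝ)
    (hu : u = fun t x => U (t + k₁) (g x + k₂) / (k₃ * Real.sqrt (f x * (deriv g x)^3))) :
    ∀ t : ℝ, ∀ x ∈ I,
      deriv (deriv (fun y => f y * iteratedDeriv 2 (fun y' => u t y') y)) x
        + (deriv g x)^4 * f x * iteratedDeriv 2 (fun s => u s x) t = 0 := by
  subst hu
  intro t x hx
  have hV : ContDiff ℝ (⊤ : ℕ∞) (U (t + k₁)) := hU.comp (contDiff_const.prodMk contDiff_id)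
  have htime :
      iteratedDeriv 2 (fun s => U (s + k₁) (g x + k₂) / (k₃ * √(f x * deriv g x ^ 3))) t
        = iteratedDeriv 2 (fun s => U s (g x + k₂)) (t + k₁) / (k₃ * √(f x * deriv g x ^ 3)) := by
    rw [iteratedDeriv_div_const, iteratedDeriv_comp_add_const (f := fun s => U s (g x + k₂))]
  rw [deriv_deriv_mul_iteratedDeriv_two_div_sqrt hIopen hf hg hfpos hg' hEqI hEqII hV k₂ hk₃ hx,
    htime]
  linear_combination (deriv g x ^ 4 * f x / (k₃ * √(f x * deriv g x ^ 3)))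
    * hUbeam (t + k₁) (g x + k₂)

/-- pulling back a solution of the uniform beam equation by the
transformation `T = t + k₁`, `X = g(x) + k₂`, `U = k₃·u·√(f·g'³)` yields a solution
of the Euler–Bernoulli equation `(f·u_xx)_xx + g'⁴·f·u_tt = 0`, provided `f, g`
satisfy Eqs. (I) and (II). -/
theorem statement0
    (I : Set ℝ) (hIopen : IsOpen I) (hIinterval : I.OrdConnected)
    (f g : ℝ → ℝ)
    (hf : ContDiffOn ℝ (⊤ : ℕ∞) f I) (hg : ContDiffOn ℝ (⊤ : ℕ∞) g I)
    (hfpos : ∀ x ∈ I, 0 < f x) (hg' : ∀ x ∈ I, 0 < deriv g x)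
    (hEqI : ∀ x ∈ I, SatEqI f g x) (hEqII : ∀ x ∈ I, SatEqII f x)
    (k₁ k₂ k₃ : ℝ) (hk₃ : k₃ ≠ 0)
    (U : ℝ → ℝ → ℝ)
    (hU : ContDiff ℝ (⊤ : ℕ∞) (fun p : ℝ × ℝ => U p.1 p.2))
    (hUbeam : ∀ T X : ℝ,
      iteratedDeriv 2 (fun s => U s X) T + iteratedDeriv 4 (fun y => U T y) X = 0)
    (u : ℝ → ℝ → ℝ)
    (hu : u = fun t x => U (t + k₁) (g x + k₂) / (k₃ * Real.sqrt (f x * (deriv g x)^3))) :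
    ∀ t : ℝ, ∀ x ∈ I,
      deriv (deriv (fun y => f y * iteratedDeriv 2 (fun y' => u t y') y)) x
        + (deriv g x)^4 * f x * iteratedDeriv 2 (fun s => u s x) t = 0 :=
  statement0_general I hIopen f g hf hg hfpos hg' hEqI hEqII k₁ k₂ k₃ hk₃ U hU hUbeam u hu
end

section
/- Let K > 0, A ≠ 0, B ∈ ℝ, m ∈ {3/2, 5/2}, and let L, M, P, Q be real constants with L·Q − M·P ≠ 0. Let I be a nonempty open interval on which Ax + B > 0 and P·(Ax+B)^{1/4} + Q·(Ax+B)^{3/4} ≠ 0. Then the pair f(x) = K·(Ax+B)^m, g(x) = (L·(Ax+B)^{1/4} + M·(Ax+B)^{3/4}) / (P·(Ax+B)^{1/4} + Q·(Ax+B)^{3/4}) satisfies g' ≠ 0 on I and satisfies both Eq. (I) and Eq. (II) at every point of I. -/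
/-!
If `g' ≠ 0`, Eq. (I) says that the Schwarzian derivative `g'''/g' - (3/2)(g''/g')²` of `g` equals
`(3/10)(f'/f)² - (2/5) f''/f`. For `f = K u^m` with `u = Ax + B` the right side is
`m(4 - m)/10 · A²/u²`. On the other hand `g` is a Möbius transformation of `√u`, so its
Schwarzian is that of `√u`, namely `(3/8) A²/u²`; the two agree exactly when `m ∈ {3/2, 5/2}`.
Eq. (II) only involves `f`, and for a power of `u` it reduces to the polynomial identity
`m (m - 4) (2m - 3) (2m - 5) = 0`.
-/

open Filter Set Topology

section AffineChange

variable {𝕜 F : Type*} [NontriviallyNormedField 𝕜] [NormedAddCommGroup F] [NormedSpace 𝕜 F]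

theorem deriv_iterate_comp_affine (f : 𝕜 → F) (a b : 𝕜) (n : ℕ) :
    deriv^[n] (fun x => f (a * x + b)) = fun x => a ^ n • deriv^[n] f (a * x + b) := by
  induction n with
  | zero => simp
  | succ n ih =>
    funext x
    rw [Function.iterate_succ_apply', ih, deriv_fun_const_smul_field,
      deriv_comp_mul_left (f := fun y => deriv^[n] f (y + b)), deriv_comp_add_const,
      Function.iterate_succ_apply', pow_succ, mul_smul]

theorem deriv_comp_affine (f : 𝕜 → F) (a b x : 𝕜) :
    deriv (fun x => f (a * x + b)) x = a • deriv f (a * x + b) := by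
  simpa using congrFun (deriv_iterate_comp_affine f a b 1) x

theorem Set.EqOn.deriv_of_hasDerivAt {s : Set 𝕜} (hs : IsOpen s) {f g g' : 𝕜 → F}
    (hfg : EqOn f g s) (hg : ∀ x ∈ s, HasDerivAt g (g' x) x) : EqOn (_root_.deriv f) g' s :=
  fun x hx => (hfg.deriv hs hx).trans (hg x hx).deriv

end AffineChange

section AffinePower

variable (K A B m : ℝ) {x : ℝ}

theorem deriv_iterate_const_mul_affine_rpow (n : ℕ) :
    deriv^[n] (fun x => K * (A * x + B) ^ m) x
      = K * A ^ n * (descPochhammer ℝ n).eval m * (A * x + B) ^ (m - n) := by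
  rw [deriv_iterate_comp_affine (fun y => K * y ^ m), ← iteratedDeriv_eq_iterate]
  beta_reduce
  rw [iteratedDeriv_const_mul_field, iteratedDeriv_eq_iterate, Real.iter_deriv_rpow_const,
    smul_eq_mul]
  ring

theorem deriv_iterate_const_mul_affine_rpow_of_pos (n : ℕ) (hx : 0 < A * x + B) :
    deriv^[n] (fun x => K * (A * x + B) ^ m) x
      = (descPochhammer ℝ n).eval m * (A / (A * x + B)) ^ n * (K * (A * x + B) ^ m) := by
  rw [deriv_iterate_const_mul_affine_rpow, Real.rpow_sub hx, Real.rpow_natCast, div_pow]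
  field_simp

theorem satEqII_const_mul_affine_rpow (hK : K ≠ 0) (hx : 0 < A * x + B)
    (hm : m * (m - 4) * (2 * m - 3) * (2 * m - 5) = 0) :
    SatEqII (fun x => K * (A * x + B) ^ m) x := by
  have hF : K * (A * x + B) ^ m ≠ 0 := mul_ne_zero hK (Real.rpow_pos_of_pos hx m).ne'
  have hd := fun n => deriv_iterate_const_mul_affine_rpow_of_pos K A B m n hx
  have hd1 := hd 1
  rw [Function.iterate_one] at hd1
  unfold SatEqII
  beta_reduce
  rw [hd1, hd 2, hd 3, hd 4]
  generalize K * (A * x + B) ^ m = F at hF ⊢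
  generalize A / (A * x + B) = r
  simp only [descPochhammer_succ_right, descPochhammer_zero, Polynomial.eval_mul,
    Polynomial.eval_sub, Polynomial.eval_X, Polynomial.eval_one, Polynomial.eval_ofNat,
    Nat.cast_one, Nat.cast_ofNat, CharP.cast_eq_zero, sub_zero, one_mul, pow_one]
  field_simp
  linear_combination 5 * r ^ 4 * hm

noncomputable def eqIRhs (f : ℝ → ℝ) (x : ℝ) : ℝ :=
  3 / 10 * (deriv f x / f x) ^ 2 - 2 / 5 * (deriv^[2] f x / f x)

theorem eqIRhs_const_mul_affine_rpow (hK : K ≠ 0) (hx : 0 < A * x + B) :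
    eqIRhs (fun x => K * (A * x + B) ^ m) x = m * (4 - m) / 10 * (A / (A * x + B)) ^ 2 := by
  have hF : K * (A * x + B) ^ m ≠ 0 := mul_ne_zero hK (Real.rpow_pos_of_pos hx m).ne'
  have hd := fun n => deriv_iterate_const_mul_affine_rpow_of_pos K A B m n hx
  have hd1 := hd 1
  rw [Function.iterate_one] at hd1
  unfold eqIRhs
  beta_reduce
  rw [hd1, hd 2]
  simp only [descPochhammer_succ_right, descPochhammer_zero, Polynomial.eval_mul,
    Polynomial.eval_sub, Polynomial.eval_X, Polynomial.eval_one, Nat.cast_one,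
    CharP.cast_eq_zero, sub_zero, one_mul, pow_one]
  field_simp
  ring

end AffinePower

noncomputable def schwarzian (g : ℝ → ℝ) (x : ℝ) : ℝ :=
  deriv^[3] g x / deriv g x - 3 / 2 * (deriv^[2] g x / deriv g x) ^ 2

theorem satEqI_of_schwarzian_eq {f g : ℝ → ℝ} {x : ℝ} (hg : deriv g x ≠ 0)
    (hf : f x ≠ 0) (h : schwarzian g x = eqIRhs f x) : SatEqI f g x := by
  unfold schwarzian eqIRhs at h
  unfold SatEqI
  field_simp at h ⊢
  linear_combination h

theorem Filter.EventuallyEq.schwarzian_eq {g h : ℝ → ℝ} {x : ℝ} (hgh : g =ᶠ[𝓝 x] h) :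
    schwarzian g x = schwarzian h x := by
  simp only [schwarzian, ← iteratedDeriv_eq_iterate, hgh.iteratedDeriv_eq, hgh.deriv_eq]

theorem schwarzian_comp_affine (G : ℝ → ℝ) (a b x : ℝ) :
    schwarzian (fun x => G (a * x + b)) x = a ^ 2 * schwarzian G (a * x + b) := by
  simp only [schwarzian, deriv_iterate_comp_affine, smul_eq_mul]
  rw [deriv_comp_affine, smul_eq_mul]
  rcases eq_or_ne a 0 with rfl | ha
  · simp
  rcases eq_or_ne (deriv G (a * x + b)) 0 with hG | hG
  · simp [hG]
  field_simp

section MobiusSqrt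

variable {L M P Q u : ℝ}

theorem hasDerivAt_mobius_sqrt (hu : 0 < u) (hD : P + Q * √u ≠ 0) :
    HasDerivAt (fun u => (L + M * √u) / (P + Q * √u))
      ((M * P - L * Q) / (2 * √u * (P + Q * √u) ^ 2)) u := by
  have hs := Real.hasDerivAt_sqrt hu.ne'
  have hs0 : √u ≠ 0 := (Real.sqrt_pos.2 hu).ne'
  refine HasDerivAt.congr_deriv
    (((hs.const_mul M).const_add L).div ((hs.const_mul Q).const_add P) hD) ?_
  field_simp
  ring

theorem hasDerivAt_mobius_sqrt_deriv (hu : 0 < u) (hD : P + Q * √u ≠ 0) :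
    HasDerivAt (fun u => (M * P - L * Q) / (2 * √u * (P + Q * √u) ^ 2))
      (-(M * P - L * Q) * (P + 3 * Q * √u) / (4 * √u ^ 3 * (P + Q * √u) ^ 3)) u := by
  have hs := Real.hasDerivAt_sqrt hu.ne'
  have hs0 : √u ≠ 0 := (Real.sqrt_pos.2 hu).ne'
  refine HasDerivAt.congr_deriv ((hasDerivAt_const u (M * P - L * Q)).div
    ((hs.const_mul 2).mul (((hs.const_mul Q).const_add P).pow 2))
    (mul_ne_zero (mul_ne_zero two_ne_zero hs0) (pow_ne_zero 2 hD))) ?_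
  norm_num
  field_simp
  ring

theorem hasDerivAt_mobius_sqrt_deriv2 (hu : 0 < u) (hD : P + Q * √u ≠ 0) :
    HasDerivAt
      (fun u => -(M * P - L * Q) * (P + 3 * Q * √u) / (4 * √u ^ 3 * (P + Q * √u) ^ 3))
      (3 * (M * P - L * Q) * (P ^ 2 + 4 * P * Q * √u + 5 * Q ^ 2 * √u ^ 2)
        / (8 * √u ^ 5 * (P + Q * √u) ^ 4)) u := by
  have hs := Real.hasDerivAt_sqrt hu.ne'
  have hs0 : √u ≠ 0 := (Real.sqrt_pos.2 hu).ne'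
  refine HasDerivAt.congr_deriv
    ((((hs.const_mul (3 * Q)).const_add P).const_mul (-(M * P - L * Q))).div
      (((hs.pow 3).const_mul 4).mul (((hs.const_mul Q).const_add P).pow 3))
      (mul_ne_zero (mul_ne_zero four_ne_zero (pow_ne_zero 3 hs0)) (pow_ne_zero 3 hD))) ?_
  simp only [Pi.pow_apply]
  field_simp
  ring

theorem isOpen_setOf_pos_and_add_mul_sqrt_ne_zero :
    IsOpen {v : ℝ | 0 < v ∧ P + Q * √v ≠ 0} :=
  (isOpen_lt continuous_const continuous_id).inter
    (isOpen_ne_fun (continuous_const.add (continuous_const.mul Real.continuous_sqrt))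
      continuous_const)

theorem deriv_mobius_sqrt (hu : 0 < u) (hD : P + Q * √u ≠ 0) :
    deriv (fun u => (L + M * √u) / (P + Q * √u)) u
      = (M * P - L * Q) / (2 * √u * (P + Q * √u) ^ 2) :=
  (hasDerivAt_mobius_sqrt hu hD).deriv

theorem schwarzian_mobius_sqrt (hu : 0 < u) (hD : P + Q * √u ≠ 0) (hk : M * P - L * Q ≠ 0) :
    schwarzian (fun u => (L + M * √u) / (P + Q * √u)) u = 3 / (8 * u ^ 2) := by
  have hW := isOpen_setOf_pos_and_add_mul_sqrt_ne_zero (P := P) (Q := Q)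
  have hd1 : EqOn (deriv fun u => (L + M * √u) / (P + Q * √u))
      (fun u => (M * P - L * Q) / (2 * √u * (P + Q * √u) ^ 2))
      {v | 0 < v ∧ P + Q * √v ≠ 0} :=
    fun v hv => deriv_mobius_sqrt hv.1 hv.2
  have hd2 := hd1.deriv_of_hasDerivAt hW fun v hv => hasDerivAt_mobius_sqrt_deriv hv.1 hv.2
  have hd3 := hd2.deriv_of_hasDerivAt hW fun v hv => hasDerivAt_mobius_sqrt_deriv2 hv.1 hv.2
  unfold schwarzian
  simp only [Function.iterate_succ, Function.iterate_zero, Function.comp_apply, id]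
  rw [hd1 ⟨hu, hD⟩, hd2 ⟨hu, hD⟩, hd3 ⟨hu, hD⟩]
  beta_reduce
  have hsu : √u ^ 2 = u := Real.sq_sqrt hu.le
  have hs0 : √u ≠ 0 := (Real.sqrt_pos.2 hu).ne'
  generalize √u = s at hD hs0 hsu ⊢
  subst hsu
  field_simp
  ring

end MobiusSqrt

theorem rpow_quarter_add_rpow_three_quarter {u : ℝ} (hu : 0 < u) (a b : ℝ) :
    a * u ^ ((1 : ℝ) / 4) + b * u ^ ((3 : ℝ) / 4) = u ^ ((1 : ℝ) / 4) * (a + b * √u) := by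
  rw [show (3 : ℝ) / 4 = 1 / 4 + 1 / 2 by norm_num, Real.rpow_add hu, Real.sqrt_eq_rpow]
  ring

theorem quarter_rpow_ratio_eventuallyEq (L M P Q : ℝ) {u : ℝ} (hu : 0 < u) :
    (fun u : ℝ => (L * u ^ ((1 : ℝ) / 4) + M * u ^ ((3 : ℝ) / 4))
        / (P * u ^ ((1 : ℝ) / 4) + Q * u ^ ((3 : ℝ) / 4)))
      =ᶠ[𝓝 u] fun u => (L + M * √u) / (P + Q * √u) := by
  filter_upwards [Ioi_mem_nhds hu] with v hv
  rw [rpow_quarter_add_rpow_three_quarter hv, rpow_quarter_add_rpow_three_quarter hv,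
    mul_div_mul_left _ _ (Real.rpow_pos_of_pos hv _).ne']

theorem statement12_general
    (K A B m : ℝ) (hK : 0 < K) (hA : A ≠ 0) (hm : m ∈ ({3/2, 5/2} : Set ℝ))
    (L M P Q : ℝ) (hLQMP : L * Q - M * P ≠ 0)
    (I : Set ℝ)
    (hIpos : ∀ x ∈ I, 0 < A * x + B)
    (hden : ∀ x ∈ I, P * (A * x + B) ^ ((1:ℝ)/4) + Q * (A * x + B) ^ ((3:ℝ)/4) ≠ 0)
    (f g : ℝ → ℝ)
    (hf : f = fun x => K * (A * x + B) ^ m)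
    (hg : g = fun x =>
      (L * (A * x + B) ^ ((1:ℝ)/4) + M * (A * x + B) ^ ((3:ℝ)/4))
        / (P * (A * x + B) ^ ((1:ℝ)/4) + Q * (A * x + B) ^ ((3:ℝ)/4))) :
    ∀ x ∈ I, deriv g x ≠ 0 ∧ SatEqI f g x ∧ SatEqII f x := by
  intro x hx
  have hu := hIpos x hx
  have hD : P + Q * √(A * x + B) ≠ 0 :=
    right_ne_zero_of_mul (rpow_quarter_add_rpow_three_quarter hu P Q ▸ hden x hx)
  have hk : M * P - L * Q ≠ 0 := fun h => hLQMP (by linarith)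
  set G : ℝ → ℝ := fun u => (L * u ^ ((1:ℝ)/4) + M * u ^ ((3:ℝ)/4))
    / (P * u ^ ((1:ℝ)/4) + Q * u ^ ((3:ℝ)/4))
  have hgG : g = fun x => G (A * x + B) := hg
  have hGR : G =ᶠ[𝓝 (A * x + B)] _ := quarter_rpow_ratio_eventuallyEq L M P Q hu
  have hg' : deriv g x ≠ 0 := by
    rw [hgG, deriv_comp_affine, smul_eq_mul, hGR.deriv_eq, deriv_mobius_sqrt hu hD]
    exact mul_ne_zero hA (div_ne_zero hk (mul_ne_zero (mul_ne_zero two_ne_zero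
      (Real.sqrt_pos.2 hu).ne') (pow_ne_zero 2 hD)))
  have hfx : f x ≠ 0 := hf ▸ mul_ne_zero hK.ne' (Real.rpow_pos_of_pos hu m).ne'
  have hmI : m * (4 - m) / 10 = 3 / 8 := by rcases hm with rfl | rfl <;> norm_num
  have hmII : m * (m - 4) * (2 * m - 3) * (2 * m - 5) = 0 := by
    rcases hm with rfl | rfl <;> norm_num
  refine ⟨hg', satEqI_of_schwarzian_eq hg' hfx ?_,
    hf ▸ satEqII_const_mul_affine_rpow K A B m hK.ne' hu hmII⟩
  rw [hgG, schwarzian_comp_affine, hGR.schwarzian_eq, schwarzian_mobius_sqrt hu hD hk, hf,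
    eqIRhs_const_mul_affine_rpow K A B m hK.ne' hu, hmI]
  field_simp

/-- for `m ∈ {3/2, 5/2}`, the pair `f = K(Ax+B)^m`,
`g = (L(Ax+B)^{1/4} + M(Ax+B)^{3/4})/(P(Ax+B)^{1/4} + Q(Ax+B)^{3/4})` (with
`LQ − MP ≠ 0`) satisfies `g' ≠ 0` and Eqs. (I) and (II) on `I`. -/
theorem statement12
    (K A B m : ℝ) (hK : 0 < K) (hA : A ≠ 0) (hm : m ∈ ({3/2, 5/2} : Set ℝ))
    (L M P Q : ℝ) (hLQMP : L * Q - M * P ≠ 0)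
    (I : Set ℝ) (hIopen : IsOpen I) (hIinterval : I.OrdConnected) (hIne : I.Nonempty)
    (hIpos : ∀ x ∈ I, 0 < A * x + B)
    (hden : ∀ x ∈ I, P * (A * x + B) ^ ((1:ℝ)/4) + Q * (A * x + B) ^ ((3:ℝ)/4) ≠ 0)
    (f g : ℝ → ℝ)
    (hf : f = fun x => K * (A * x + B) ^ m)
    (hg : g = fun x =>
      (L * (A * x + B) ^ ((1:ℝ)/4) + M * (A * x + B) ^ ((3:ℝ)/4))
        / (P * (A * x + B) ^ ((1:ℝ)/4) + Q * (A * x + B) ^ ((3:ℝ)/4))) :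
    ∀ x ∈ I, deriv g x ≠ 0 ∧ SatEqI f g x ∧ SatEqII f x :=
  statement12_general K A B m hK hA hm L M P Q hLQMP I hIpos hden f g hf hg
end

section
/- Let U : ℝ × ℝ → ℝ be smooth with ∂²U/∂T² + ∂⁴U/∂X⁴ = 0 on all of ℝ². Then the function u(t,x) := x·U(t, −1/x) satisfies the non-uniform Euler–Bernoulli equation ∂²/∂x²( x⁴·∂²u/∂x² ) + x^{−4}·∂²u/∂t² = 0 at every point (t,x) with x > 0. (This is a Gottlieb-type non-uniform beam, with flexural rigidity f(x) = x⁴ and lineal mass density m(x) = x^{−4}, reduced to the uniform unit beam.) -/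
/-!
For a smooth `V`, the function `x ↦ x V(-1/x)` has second derivative `V''(-1/x) / x³`. Hence
`x⁴ (x V(-1/x))'' = x V''(-1/x)` has the same shape, and applying the rule twice gives
`(x⁴ u_xx)_xx = U_XXXX(t, -1/x) / x³`. As `t` is untouched by the substitution,
`x⁻⁴ u_tt = U_TT(t, -1/x) / x³`, and the two terms cancel by the uniform beam equation.
-/

open Filter Topology

lemma hasDerivAt_neg_one_div {x : ℝ} (hx : x ≠ 0) :
    HasDerivAt (fun y : ℝ => -1 / y) (1 / x ^ 2) x := by
  have h : (fun y : ℝ => -1 / y) = -fun y => y⁻¹ := by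
    funext y
    simp [neg_div]
  rw [h]
  exact (hasDerivAt_inv hx).neg.congr_deriv (by rw [neg_neg, one_div])

lemma hasDerivAt_comp_neg_one_div {g : ℝ → ℝ} {x : ℝ} (hx : x ≠ 0)
    (hg : DifferentiableAt ℝ g (-1 / x)) :
    HasDerivAt (fun y => g (-1 / y)) (deriv g (-1 / x) / x ^ 2) x :=
  (hg.hasDerivAt.comp x (hasDerivAt_neg_one_div hx)).congr_deriv (mul_one_div _ _)

lemma hasDerivAt_mul_comp_neg_one_div {V : ℝ → ℝ} {x : ℝ} (hx : x ≠ 0)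
    (hV : DifferentiableAt ℝ V (-1 / x)) :
    HasDerivAt (fun y => y * V (-1 / y)) (V (-1 / x) + deriv V (-1 / x) / x) x := by
  refine ((hasDerivAt_id x).mul (hasDerivAt_comp_neg_one_div hx hV)).congr_deriv ?_
  simp only [id]
  field_simp

lemma iteratedDeriv_two_mul_comp_neg_one_div {V : ℝ → ℝ} (hV : ContDiff ℝ 2 V) {x : ℝ}
    (hx : x ≠ 0) :
    iteratedDeriv 2 (fun y => y * V (-1 / y)) x = iteratedDeriv 2 V (-1 / x) / x ^ 3 := by
  have hV₁ : Differentiable ℝ V := hV.differentiable two_ne_zero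
  have hV₂ : Differentiable ℝ (deriv V) := hV.differentiable_deriv_two
  have hderiv : deriv (fun y => y * V (-1 / y)) =ᶠ[𝓝 x]
      fun y => V (-1 / y) + deriv V (-1 / y) * y⁻¹ := by
    filter_upwards [isOpen_ne.mem_nhds hx] with y hy
    simpa [div_eq_mul_inv] using (hasDerivAt_mul_comp_neg_one_div hy (hV₁ _)).deriv
  have hsecond : HasDerivAt (fun y => V (-1 / y) + deriv V (-1 / y) * y⁻¹)
      (deriv V (-1 / x) / x ^ 2 + (deriv (deriv V) (-1 / x) / x ^ 2 * x⁻¹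
        + deriv V (-1 / x) * -(x ^ 2)⁻¹)) x :=
    (hasDerivAt_comp_neg_one_div hx (hV₁ _)).add
      ((hasDerivAt_comp_neg_one_div hx (hV₂ _)).mul (hasDerivAt_inv hx))
  rw [iteratedDeriv_succ, iteratedDeriv_one, hderiv.deriv_eq, hsecond.deriv,
    iteratedDeriv_succ, iteratedDeriv_one]
  field_simp
  ring

/-- if `U` solves the uniform beam equation `U_TT + U_XXXX = 0` on `ℝ²`,
then `u(t,x) = x·U(t, −1/x)` solves the Gottlieb-type non-uniform beam equation
`(x⁴·u_xx)_xx + x^{−4}·u_tt = 0` for `x > 0`. -/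
theorem statement14
    (U : ℝ → ℝ → ℝ)
    (hU : ContDiff ℝ (⊤ : ℕ∞) (fun p : ℝ × ℝ => U p.1 p.2))
    (hUbeam : ∀ T X : ℝ,
      iteratedDeriv 2 (fun s => U s X) T + iteratedDeriv 4 (fun y => U T y) X = 0)
    (u : ℝ → ℝ → ℝ)
    (hu : u = fun t x => x * U t (-1 / x)) :
    ∀ t x : ℝ, 0 < x →
      deriv (deriv (fun y => y^4 * iteratedDeriv 2 (fun y' => u t y') y)) x
        + x ^ (-4 : ℤ) * iteratedDeriv 2 (fun s => u s x) t = 0 := by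
  intro t x hx
  subst hu
  have hV : ContDiff ℝ (⊤ : ℕ∞) (U t) := hU.comp (f := fun y => (t, y))
    (contDiff_const.prodMk contDiff_id)
  have hV₂ : ContDiff ℝ 2 (U t) := hV.of_le (WithTop.coe_le_coe.2 le_top)
  have hV₄ : ContDiff ℝ 2 (deriv^[2] (U t)) := (hV.iterate_deriv 2).of_le (WithTop.coe_le_coe.2 le_top)
  have hrigid : (fun y => y ^ 4 * iteratedDeriv 2 (fun y' => y' * U t (-1 / y')) y)
      =ᶠ[𝓝 x] fun y => y * deriv^[2] (U t) (-1 / y) := by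
    filter_upwards [isOpen_ne.mem_nhds hx.ne'] with y hy
    rw [iteratedDeriv_two_mul_comp_neg_one_div hV₂ hy, iteratedDeriv_eq_iterate]
    field_simp
  have hspace : deriv (deriv fun y => y ^ 4 * iteratedDeriv 2 (fun y' => y' * U t (-1 / y')) y) x
      = iteratedDeriv 4 (U t) (-1 / x) / x ^ 3 := by
    have h := iteratedDeriv_two_mul_comp_neg_one_div hV₄ hx.ne'
    rw [hrigid.deriv.deriv_eq]
    simp only [iteratedDeriv_eq_iterate, Function.iterate_succ_apply',
      Function.iterate_zero_apply] at h ⊢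
    exact h
  have htime : iteratedDeriv 2 (fun s => x * U s (-1 / x)) t
      = x * iteratedDeriv 2 (fun s => U s (-1 / x)) t :=
    iteratedDeriv_const_mul_field x _
  dsimp only
  rw [hspace, htime, eq_neg_of_add_eq_zero_left (hUbeam t (-1 / x)), zpow_neg]
  field_simp
  ring
end
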